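/- Let ω : ℝ^m → ℝ^m be continuously differentiable with sup_x ‖Dω(x)‖ ≤ L < ∞, and λ > 0 with λ * L < 1. Then g(x) = x - λ • ω(x) is a C¹ diffeomorphism of ℝ^m onto itself when λ * L ≤ 1/3. -/

import Mathlib

/-!
Since `λ • ω` has derivative of norm at most `λ L < 1`, it is a contraction, so `x ↦ x - λ • ω x`
approximates the identity on the whole space and is therefore a homeomorphism. Its derivative
`1 - λ • Dω(x)` is invertible by the Neumann series, so the inverse is again `C¹`.
-/

open Set NNReal

variable {E : Type*} [NormedAddCommGroup E] [NormedSpace ℝ E]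

theorem approximatesLinearOn_id_sub_of_lipschitzWith {f : E → E} {K : ℝ≥0}
    (hf : LipschitzWith K f) :
    ApproximatesLinearOn (fun x => x - f x) (ContinuousLinearEquiv.refl ℝ E : E →L[ℝ] E) univ K := by
  intro x _ y _
  have hdiff : x - f x - (y - f y) - (x - y) = -(f x - f y) := by abel
  simpa [hdiff, norm_sub_rev] using hf.norm_sub_le x y

variable [CompleteSpace E]

noncomputable def Homeomorph.idSubOfLipschitzWith {f : E → E} {K : ℝ≥0}
    (hf : LipschitzWith K f) (hK : K < 1) : E ≃ₜ E :=
  (approximatesLinearOn_id_sub_of_lipschitzWith hf).toHomeomorph _ <| by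
    rcases subsingleton_or_nontrivial E with hE | hE
    · exact .inl hE
    · exact .inr (by simpa using hK)

theorem Homeomorph.contDiff_idSubOfLipschitzWith_symm {f : E → E} {K : ℝ≥0} {n : WithTop ℕ∞}
    (hfL : LipschitzWith K f) (hK : K < 1) (hf : ContDiff ℝ n f) (hn : n ≠ 0)
    (hf' : ∀ x, ‖fderiv ℝ f x‖₊ ≤ K) :
    ContDiff ℝ n (Homeomorph.idSubOfLipschitzWith hfL hK).symm := by
  have hsmall (x : E) : ‖fderiv ℝ f x‖ < 1 := (hf' x).trans_lt hK
  exact Homeomorph.contDiff_symm _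
    (f₀' := fun x => .ofUnit (Units.oneSub (fderiv ℝ f x) (hsmall x)))
    (fun x => (hasFDerivAt_id x).sub (hf.differentiable hn x).hasFDerivAt)
    (contDiff_id.sub hf)

theorem stmt_10 {m : ℕ} (ω : EuclideanSpace ℝ (Fin m) → EuclideanSpace ℝ (Fin m))
    (hω : ContDiff ℝ 1 ω) (L : ℝ) (hL : ∀ x, ‖fderiv ℝ ω x‖ ≤ L)
    (lam : ℝ) (hlam : 0 < lam) (h : lam * L ≤ 1 / 3) :
    ∃ ginv : EuclideanSpace ℝ (Fin m) → EuclideanSpace ℝ (Fin m),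
      ContDiff ℝ 1 (fun x => x - lam • ω x) ∧ ContDiff ℝ 1 ginv ∧
      Function.LeftInverse ginv (fun x => x - lam • ω x) ∧
      Function.RightInverse ginv (fun x => x - lam • ω x) := by
  have hsmul : ContDiff ℝ 1 (lam • ω) := hω.const_smul lam
  have hbound (x : EuclideanSpace ℝ (Fin m)) :
      ‖fderiv ℝ (lam • ω) x‖₊ ≤ (lam * L).toNNReal := by
    refine le_toNNReal_of_coe_le ?_
    rw [coe_nnnorm, fderiv_const_smul (hω.differentiable one_ne_zero x), norm_smul,
      Real.norm_of_nonneg hlam.le]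
    exact mul_le_mul_of_nonneg_left (hL x) hlam.le
  have hK : (lam * L).toNNReal < 1 := by
    rw [Real.toNNReal_lt_one]
    linarith
  have hlip := lipschitzWith_of_nnnorm_fderiv_le (hsmul.differentiable one_ne_zero) hbound
  let g := Homeomorph.idSubOfLipschitzWith hlip hK
  exact ⟨g.symm, contDiff_id.sub hsmul,
    Homeomorph.contDiff_idSubOfLipschitzWith_symm hlip hK hsmul one_ne_zero hbound,
    g.symm_apply_apply, g.apply_symm_apply⟩
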